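/- Suppose X₂ : [0,T) → [0,∞) is continuous, nonnegative, and satisfies X₂' (t) ≤ -(μ(t)/C_p²)·X₂(t) on every interval where μ(t) - C·Z(X₂(t), t) > 0, where μ(t) > 0 is continuous, C > 0, C_p > 0, and Z(x,t) is continuous and monotone nondecreasing in x ≥ 0. If μ(0) - C·Z(X₂(0),0) > 0 and for all t ∈ [0,T) we have μ(t) - C·Z(Y₂(t), t) > 0, where Y₂(t) := X₂(0)·exp(-∫₀ᵗ μ(s)/C_p² ds), then μ(t) - C·Z(X₂(t),t) > 0 for all t ∈ [0,T) and consequently X₂(t) ≤ X₂(0) for all t ∈ [0,T). -/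

import Mathlib

open Real Set intervalIntegral Filter Topology

theorem stmt_11 (T C Cp : ℝ) (hT : 0 < T) (hC : 0 < C) (hCp : 0 < Cp)
    (X₂ μ : ℝ → ℝ) (Z : ℝ → ℝ → ℝ)
    (hX₂c : ContinuousOn X₂ (Ico 0 T))
    (hX₂nonneg : ∀ t ∈ Ico (0 : ℝ) T, 0 ≤ X₂ t)
    (hX₂diff : ∀ t ∈ Ico (0 : ℝ) T, DifferentiableAt ℝ X₂ t)
    (hμc : Continuous μ) (hμpos : ∀ t, 0 < μ t)
    (hZc : Continuous (Function.uncurry Z))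
    (hZmono : ∀ t : ℝ, MonotoneOn (fun x => Z x t) (Ici (0 : ℝ)))
    (hderiv : ∀ t ∈ Ico (0 : ℝ) T, 0 < μ t - C * Z (X₂ t) t →
      deriv X₂ t ≤ -(μ t / Cp ^ 2) * X₂ t)
    (hinit : 0 < μ 0 - C * Z (X₂ 0) 0)
    (hY : ∀ t ∈ Ico (0 : ℝ) T,
      0 < μ t - C * Z (X₂ 0 * Real.exp (-(∫ s in (0 : ℝ)..t, μ s / Cp ^ 2))) t) :
    ∀ t ∈ Ico (0 : ℝ) T, 0 < μ t - C * Z (X₂ t) t ∧ X₂ t ≤ X₂ 0 := by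
  set g : ℝ → ℝ := fun t => μ t - C * Z (X₂ t) t with hg
  set J : ℝ → ℝ := fun t => ∫ s in (0 : ℝ)..t, μ s / Cp ^ 2 with hJ
  have hμd : Continuous (fun s => μ s / Cp ^ 2) := hμc.div_const _
  have hJd : ∀ t, HasDerivAt J (μ t / Cp ^ 2) t := fun t =>
    intervalIntegral.integral_hasDerivAt_right (hμd.intervalIntegrable 0 t)
      (hμd.stronglyMeasurableAtFilter _ _) hμd.continuousAt
  have hJc : Continuous J := continuous_iff_continuousAt.mpr fun t => (hJd t).continuousAt
  have hJ0 : J 0 = 0 := intervalIntegral.integral_same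
  have hX0 : 0 ≤ X₂ 0 := hX₂nonneg 0 ⟨le_refl _, hT⟩
  have hgc : ContinuousOn g (Ico 0 T) := by
    apply (hμc.continuousOn).sub
    apply continuousOn_const.mul
    exact hZc.comp_continuousOn (hX₂c.prodMk continuousOn_id)
  -- key Gronwall step
  have key : ∀ b ∈ Ico (0 : ℝ) T, (∀ s ∈ Ico (0 : ℝ) b, 0 < g s) →
      X₂ b ≤ X₂ 0 * Real.exp (-(J b)) := by
    intro b hb hpos
    rcases eq_or_lt_of_le hb.1 with h0 | h0
    · rw [← h0]; simp [hJ0]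
    · set W : ℝ → ℝ := fun t => X₂ t * Real.exp (J t) with hW
      have hsub : Icc (0 : ℝ) b ⊆ Ico 0 T := fun s hs => ⟨hs.1, lt_of_le_of_lt hs.2 hb.2⟩
      have hWc : ContinuousOn W (Icc 0 b) :=
        (hX₂c.mono hsub).mul ((Real.continuous_exp.comp hJc).continuousOn)
      have hWd : ∀ s ∈ Ioo (0 : ℝ) b,
          HasDerivAt W (deriv X₂ s * Real.exp (J s) +
            X₂ s * (Real.exp (J s) * (μ s / Cp ^ 2))) s := by
        intro s hs
        have hsT : s ∈ Ico (0 : ℝ) T := ⟨hs.1.le, lt_trans hs.2 hb.2⟩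
        exact ((hX₂diff s hsT).hasDerivAt).mul ((hJd s).exp)
      have hanti : AntitoneOn W (Icc 0 b) := by
        apply antitoneOn_of_deriv_nonpos (convex_Icc 0 b) hWc
        · intro s hs
          rw [interior_Icc] at hs
          exact ((hWd s hs).differentiableAt).differentiableWithinAt
        · intro s hs
          rw [interior_Icc] at hs
          have hsT : s ∈ Ico (0 : ℝ) T := ⟨hs.1.le, lt_trans hs.2 hb.2⟩
          rw [(hWd s hs).deriv]
          have hd := hderiv s hsT (hpos s ⟨hs.1.le, hs.2⟩)
          have he : (0 : ℝ) < Real.exp (J s) := Real.exp_pos _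
          nlinarith [mul_le_mul_of_nonneg_right hd he.le]
      have hWb : X₂ b * Real.exp (J b) ≤ X₂ 0 := by
        have := hanti (left_mem_Icc.mpr h0.le) (right_mem_Icc.mpr h0.le) h0.le
        simpa [hW, hJ0] using this
      rw [Real.exp_neg, ← div_eq_mul_inv]
      exact (le_div_iff₀ (Real.exp_pos _)).mpr hWb
  -- step: positivity propagates to the endpoint
  have step : ∀ b ∈ Ico (0 : ℝ) T, (∀ s ∈ Ico (0 : ℝ) b, 0 < g s) →
      0 < g b ∧ X₂ b ≤ X₂ 0 := by
    intro b hb hpos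
    have hXb := key b hb hpos
    have hYb := hY b hb
    have hJb : 0 ≤ J b := by
      apply intervalIntegral.integral_nonneg hb.1
      intro s _
      exact div_nonneg (hμpos s).le (by positivity)
    have hexple : Real.exp (-(J b)) ≤ 1 := by
      rw [← Real.exp_zero]
      exact Real.exp_le_exp.mpr (by linarith)
    have hYnn : (0 : ℝ) ≤ X₂ 0 * Real.exp (-(J b)) :=
      mul_nonneg hX0 (Real.exp_pos _).le
    have hmono := hZmono b (hX₂nonneg b hb) hYnn hXb
    constructor
    · have := mul_le_mul_of_nonneg_left hmono hC.le
      simp only [hg]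
      linarith
    · calc X₂ b ≤ X₂ 0 * Real.exp (-(J b)) := hXb
        _ ≤ X₂ 0 * 1 := mul_le_mul_of_nonneg_left hexple hX0
        _ = X₂ 0 := mul_one _
  -- no first crossing
  have all : ∀ t ∈ Ico (0 : ℝ) T, 0 < g t := by
    by_contra h
    push_neg at h
    obtain ⟨t₁, ht₁, hgt₁⟩ := h
    set B : Set ℝ := {t | t ∈ Ico (0 : ℝ) T ∧ g t ≤ 0} with hB
    have hne : B.Nonempty := ⟨t₁, ht₁, hgt₁⟩
    have hbdd : BddBelow B := ⟨0, fun x hx => hx.1.1⟩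
    set t₀ := sInf B with ht₀
    have ht₀0 : 0 ≤ t₀ := le_csInf hne fun x hx => hx.1.1
    have ht₀T : t₀ < T := lt_of_le_of_lt (csInf_le hbdd ⟨ht₁, hgt₁⟩) ht₁.2
    have hprev : ∀ s ∈ Ico (0 : ℝ) t₀, 0 < g s := by
      intro s hs
      by_contra hle
      push_neg at hle
      have : t₀ ≤ s := csInf_le hbdd ⟨⟨hs.1, lt_trans hs.2 ht₀T⟩, hle⟩
      linarith [hs.2]
    have hpos := (step t₀ ⟨ht₀0, ht₀T⟩ hprev).1
    obtain ⟨u, -, hu_tend, hu_mem⟩ := exists_seq_tendsto_sInf hne hbdd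
    have htend : Tendsto (g ∘ u) atTop (𝓝 (g t₀)) := by
      apply (hgc t₀ ⟨ht₀0, ht₀T⟩).tendsto.comp
      exact tendsto_nhdsWithin_iff.mpr ⟨hu_tend, Eventually.of_forall fun n => (hu_mem n).1⟩
    have : g t₀ ≤ 0 := le_of_tendsto htend (Eventually.of_forall fun n => (hu_mem n).2)
    linarith
  intro t ht
  exact step t ht fun s hs => all s ⟨hs.1, lt_trans hs.2 ht.2⟩
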